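/- With ā = (1/n)Σᵢ |1⟩⟨1|_i and c = i(|0^n⟩⟨1^n| − |1^n⟩⟨0^n|), the n-qubit cat state |GHZ_n⟩ = (|0^n⟩+|1^n⟩)/√2 satisfies ⟨GHZ_n| i[ā,c] |GHZ_n⟩ = 1; hence for n > 4, |⟨GHZ_n| i[ā,c] |GHZ_n⟩| > 2/√n and |GHZ_n⟩ is entangled (not fully separable). -/
import Mathlib


open Matrix
open scoped ComplexOrder Classical

/-- The operator `a` acting on the `i`-th qubit of an `n`-qubit system (identity elsewhere). -/
noncomputable def localOp (n : ℕ) (i : Fin n) (a : Matrix (Fin 2) (Fin 2) ℂ) :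
    Matrix (Fin n → Fin 2) (Fin n → Fin 2) ℂ :=
  fun f g => if ∀ j, j ≠ i → f j = g j then a (f i) (g i) else 0

def prodVec {n : ℕ} (φ : Fin n → Fin 2 → ℂ) : (Fin n → Fin 2) → ℂ :=
  fun f => ∏ j, φ j (f j)

def FullySepState {n : ℕ} (ρ : Matrix (Fin n → Fin 2) (Fin n → Fin 2) ℂ) : Prop :=
  ∃ (k : ℕ) (p : Fin k → ℝ) (φ : Fin k → Fin n → Fin 2 → ℂ),
    (∀ i, 0 ≤ p i) ∧ (∑ i, p i = 1) ∧
    (∀ i j, ∑ x, ‖φ i j x‖ ^ 2 = 1) ∧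
    ρ = ∑ i, (p i : ℂ) • vecMulVec (prodVec (φ i)) (star (prodVec (φ i)))

/-- `|1⟩⟨1|` on one qubit. -/
def proj1 : Matrix (Fin 2) (Fin 2) ℂ := !![0, 0; 0, 1]

/-- The basis vector `|0ⁿ⟩`. -/
noncomputable def allZero (n : ℕ) : (Fin n → Fin 2) → ℂ :=
  fun f => if f = (fun _ => 0) then 1 else 0

/-- The basis vector `|1ⁿ⟩`. -/
noncomputable def allOne (n : ℕ) : (Fin n → Fin 2) → ℂ :=
  fun f => if f = (fun _ => 1) then 1 else 0

/-- The averaging observable `ā = (1/n) Σᵢ |1⟩⟨1|ᵢ`. -/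
noncomputable def abar (n : ℕ) : Matrix (Fin n → Fin 2) (Fin n → Fin 2) ℂ :=
  (1 / n : ℂ) • ∑ i, localOp n i proj1

/-- The observable `c = i(|0ⁿ⟩⟨1ⁿ| − |1ⁿ⟩⟨0ⁿ|)`. -/
noncomputable def catC (n : ℕ) : Matrix (Fin n → Fin 2) (Fin n → Fin 2) ℂ :=
  Complex.I • (vecMulVec (allZero n) (star (allOne n))
    - vecMulVec (allOne n) (star (allZero n)))

/-- The cat state vector `|GHZ_n⟩ = (|0ⁿ⟩ + |1ⁿ⟩)/√2`. -/
noncomputable def ghzN (n : ℕ) : (Fin n → Fin 2) → ℂ :=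
  fun f => ((1 / Real.sqrt 2 : ℝ) : ℂ) * (allZero n f + allOne n f)

section helpers

variable (n : ℕ)

lemma proj1_apply_zero (x : Fin 2) : proj1 x 0 = 0 := by
  fin_cases x <;> simp [proj1]

lemma proj1_apply_one (x : Fin 2) : proj1 x 1 = if x = 1 then 1 else 0 := by
  fin_cases x <;> simp [proj1]

lemma zero_ne_one_fn (hn : 0 < n) : (fun _ : Fin n => (0 : Fin 2)) ≠ (fun _ => 1) := by
  intro h
  have := congrFun h ⟨0, hn⟩
  simp at this

lemma localOp_mulVec_allZero (i : Fin n) :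
    (localOp n i proj1).mulVec (allZero n) = 0 := by
  funext f
  simp only [Matrix.mulVec, dotProduct, Pi.zero_apply]
  rw [Finset.sum_eq_single (fun _ => (0 : Fin 2))]
  · by_cases h : ∀ j, j ≠ i → f j = (0 : Fin 2) <;>
      simp [localOp, allZero, h, proj1_apply_zero]
  · intro b _ hb; simp [allZero, hb]
  · simp

lemma localOp_mulVec_allOne (i : Fin n) :
    (localOp n i proj1).mulVec (allOne n) = allOne n := by
  funext f
  simp only [Matrix.mulVec, dotProduct]
  rw [Finset.sum_eq_single (fun _ => (1 : Fin 2))]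
  · by_cases hf : f = fun _ => (1 : Fin 2)
    · subst hf; simp [localOp, allOne, proj1_apply_one]
    · by_cases h : ∀ j, j ≠ i → f j = (1 : Fin 2)
      · have h2 : f i ≠ 1 := by
          intro hfi
          refine hf (funext fun j => ?_)
          by_cases hj : j = i
          · rw [hj]; exact hfi
          · exact h j hj
        simp [localOp, allOne, h, hf, proj1_apply_one, h2]
      · simp [localOp, allOne, h, hf]
  · intro b _ hb; simp [allOne, hb]
  · simp

lemma abar_mulVec_allZero : (abar n).mulVec (allZero n) = 0 := by
  unfold abar
  rw [Matrix.smul_mulVec]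
  have : (∑ i, localOp n i proj1).mulVec (allZero n) = 0 := by
    funext f
    have : (∑ i, localOp n i proj1).mulVec (allZero n) =
        ∑ i, (localOp n i proj1).mulVec (allZero n) := by
      funext g
      simp [Matrix.mulVec, dotProduct, Matrix.sum_apply, Finset.sum_mul]
      rw [Finset.sum_comm]
    rw [this]
    simp [localOp_mulVec_allZero]
  rw [this]; simp

lemma abar_mulVec_allOne (hn : 0 < n) : (abar n).mulVec (allOne n) = allOne n := by
  unfold abar
  rw [Matrix.smul_mulVec]
  have h1 : (∑ i, localOp n i proj1).mulVec (allOne n) =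
      ∑ i : Fin n, (localOp n i proj1).mulVec (allOne n) := by
    funext g
    simp [Matrix.mulVec, dotProduct, Matrix.sum_apply, Finset.sum_mul]
    rw [Finset.sum_comm]
  rw [h1]
  have h2 : ∀ i : Fin n, (localOp n i proj1).mulVec (allOne n) = allOne n :=
    localOp_mulVec_allOne n
  simp only [h2, Finset.sum_const, Finset.card_univ, Fintype.card_fin]
  funext f
  have hn' : (n : ℂ) ≠ 0 := Nat.cast_ne_zero.mpr hn.ne'
  simp [Pi.smul_apply, smul_eq_mul]
  field_simp

lemma catC_mulVec_allZero (hn : 0 < n) :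
    (catC n).mulVec (allZero n) = (-Complex.I) • allOne n := by
  funext f
  simp only [Matrix.mulVec, dotProduct]
  rw [Finset.sum_eq_single (fun _ => (0 : Fin 2))]
  · simp [catC, Matrix.vecMulVec_apply, allZero, allOne, zero_ne_one_fn n hn,
      (zero_ne_one_fn n hn).symm]
    try split <;> simp
  · intro b _ hb; simp [allZero, hb]
  · simp

lemma catC_mulVec_allOne (hn : 0 < n) :
    (catC n).mulVec (allOne n) = Complex.I • allZero n := by
  funext f
  simp only [Matrix.mulVec, dotProduct]
  rw [Finset.sum_eq_single (fun _ => (1 : Fin 2))]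
  · simp [catC, Matrix.vecMulVec_apply, allZero, allOne, zero_ne_one_fn n hn,
      (zero_ne_one_fn n hn).symm]
  · intro b _ hb; simp [allOne, hb]
  · simp

lemma dot_ZZ : star (allZero n) ⬝ᵥ allZero n = 1 := by
  simp only [dotProduct, Pi.star_apply]
  rw [Finset.sum_eq_single (fun _ => (0 : Fin 2))]
  · simp [allZero]
  · intro b _ hb; simp [allZero, hb]
  · simp

lemma dot_OO : star (allOne n) ⬝ᵥ allOne n = 1 := by
  simp only [dotProduct, Pi.star_apply]
  rw [Finset.sum_eq_single (fun _ => (1 : Fin 2))]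
  · simp [allOne]
  · intro b _ hb; simp [allOne, hb]
  · simp

lemma dot_ZO (hn : 0 < n) : star (allZero n) ⬝ᵥ allOne n = 0 := by
  simp only [dotProduct, Pi.star_apply]
  rw [Finset.sum_eq_single (fun _ => (1 : Fin 2))]
  · simp [allZero, allOne, zero_ne_one_fn n hn, (zero_ne_one_fn n hn).symm]
  · intro b _ hb; simp [allOne, hb]
  · simp

lemma dot_OZ (hn : 0 < n) : star (allOne n) ⬝ᵥ allZero n = 0 := by
  simp only [dotProduct, Pi.star_apply]
  rw [Finset.sum_eq_single (fun _ => (0 : Fin 2))]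
  · simp [allZero, allOne, zero_ne_one_fn n hn, (zero_ne_one_fn n hn).symm]
  · intro b _ hb; simp [allZero, hb]
  · simp

end helpers

/-- `⟨GHZ_n| i[ā,c] |GHZ_n⟩ = 1`, which for `n > 4` exceeds the separable bound `2/√n`;
hence the cat state is entangled. -/
theorem stmt16 (n : ℕ) (hn : 0 < n) :
    star (ghzN n) ⬝ᵥ (Complex.I • (abar n * catC n - catC n * abar n)).mulVec (ghzN n)
      = 1 ∧
    (4 < n →
      2 / Real.sqrt n < 1 ∧
      ¬ FullySepState (vecMulVec (ghzN n) (star (ghzN n)))) := by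
  have hg : ghzN n = ((1 / Real.sqrt 2 : ℝ) : ℂ) • (allZero n + allOne n) := by
    funext f; simp [ghzN, Pi.smul_apply, smul_eq_mul]
  have hhalf : (1 / Real.sqrt 2) * (1 / Real.sqrt 2) = 1 / 2 := by
    rw [div_mul_div_comm, one_mul, Real.mul_self_sqrt (by norm_num : (0:ℝ) ≤ 2)]
  constructor
  · -- the expectation value is 1
    have key : (Complex.I • (abar n * catC n - catC n * abar n)).mulVec (ghzN n) = ghzN n := by
      rw [hg]
      simp only [Matrix.smul_mulVec, Matrix.sub_mulVec, Matrix.mulVec_smul,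
        Matrix.mulVec_add, ← Matrix.mulVec_mulVec, abar_mulVec_allZero,
        abar_mulVec_allOne n hn, catC_mulVec_allZero n hn, catC_mulVec_allOne n hn,
        Matrix.mulVec_zero, smul_zero, add_zero, zero_add]
      funext f
      simp only [Pi.smul_apply, Pi.add_apply, Pi.sub_apply, Pi.zero_apply, smul_eq_mul,
        Matrix.mulVec_zero]
      have hI : Complex.I * Complex.I = -1 := Complex.I_mul_I
      linear_combination (-(((1 / Real.sqrt 2 : ℝ) : ℂ) * (allZero n f + allOne n f))) * hI
    rw [key, hg]
    simp only [star_smul, star_add, smul_dotProduct, dotProduct_smul,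
      add_dotProduct, dotProduct_add, dot_ZZ, dot_OO, dot_ZO n hn, dot_OZ n hn,
      smul_eq_mul, RCLike.star_def, Complex.conj_ofReal]
    have h2 : ((1 / Real.sqrt 2 : ℝ) : ℂ) * ((1 / Real.sqrt 2 : ℝ) : ℂ) = 1 / 2 := by
      rw [← Complex.ofReal_mul, hhalf]; norm_num
    linear_combination (2:ℂ) * h2
  · intro h4
    have hsn : (2:ℝ) < Real.sqrt n := by
      have : Real.sqrt 4 < Real.sqrt n :=
        Real.sqrt_lt_sqrt (by norm_num) (by exact_mod_cast h4)
      calc (2:ℝ) = Real.sqrt 4 := by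
            rw [show (4:ℝ) = 2 ^ 2 by norm_num, Real.sqrt_sq (by norm_num : (0:ℝ) ≤ 2)]
        _ < Real.sqrt n := this
    refine ⟨(div_lt_one (lt_trans two_pos hsn)).mpr hsn, ?_⟩
    rintro ⟨k, p, φ, hp, hsum, hnorm, hρ⟩
    set e : Fin n → Fin 2 := fun j => if j = ⟨0, hn⟩ then 1 else 0 with he
    have hez : e ≠ fun _ => 0 := by
      intro h; have := congrFun h ⟨0, hn⟩; simp [he] at this
    have heo : e ≠ fun _ => 1 := by
      intro h; have := congrFun h ⟨1, by omega⟩; simp [he, Fin.ext_iff] at this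
    have hghz_e : ghzN n e = 0 := by simp [ghzN, allZero, allOne, hez, heo]
    -- diagonal entry at e
    have hdiag := congrFun (congrFun hρ e) e
    simp only [Matrix.vecMulVec_apply, Matrix.sum_apply, Matrix.smul_apply, Pi.star_apply,
      smul_eq_mul, hghz_e, zero_mul, RCLike.star_def, Complex.mul_conj] at hdiag
    have hreal : ∑ i, p i * Complex.normSq (prodVec (φ i) e) = 0 := by
      exact_mod_cast hdiag.symm
    have hz : ∀ i, p i = 0 ∨ prodVec (φ i) e = 0 := by
      intro i
      have h := (Finset.sum_eq_zero_iff_of_nonneg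
        (fun i _ => mul_nonneg (hp i) (Complex.normSq_nonneg _))).mp hreal i (Finset.mem_univ i)
      rcases mul_eq_zero.mp h with h | h
      · exact Or.inl h
      · exact Or.inr (by simpa [Complex.normSq_eq_zero] using h)
    -- off-diagonal entry
    have hRHS : ∀ i, (p i : ℂ) *
        (prodVec (φ i) (fun _ => 0) * (starRingEnd ℂ) (prodVec (φ i) (fun _ => 1))) = 0 := by
      intro i
      rcases hz i with h | h
      · simp [h]
      · obtain ⟨j, -, hj⟩ := Finset.prod_eq_zero_iff.mp (by simpa [prodVec] using h)
        by_cases hj0 : j = ⟨0, hn⟩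
        · have h1 : φ i j 1 = 0 := by simpa [he, hj0] using hj
          have : prodVec (φ i) (fun _ => 1) = 0 :=
            Finset.prod_eq_zero (Finset.mem_univ j) h1
          simp [this]
        · have h0 : φ i j 0 = 0 := by simpa [he, hj0] using hj
          have : prodVec (φ i) (fun _ => 0) = 0 :=
            Finset.prod_eq_zero (Finset.mem_univ j) h0
          simp [this]
    have hg0 : ghzN n (fun _ => 0) = ((1 / Real.sqrt 2 : ℝ) : ℂ) := by
      simp [ghzN, allZero, allOne, zero_ne_one_fn n hn]
    have hg1 : ghzN n (fun _ => 1) = ((1 / Real.sqrt 2 : ℝ) : ℂ) := by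
      simp [ghzN, allZero, allOne, (zero_ne_one_fn n hn).symm]
    have hoff := congrFun (congrFun hρ (fun _ => 0)) (fun _ => 1)
    simp only [Matrix.vecMulVec_apply, Matrix.sum_apply, Matrix.smul_apply, Pi.star_apply,
      smul_eq_mul, hg0, hg1, RCLike.star_def] at hoff
    rw [Finset.sum_eq_zero fun i _ => hRHS i] at hoff
    rw [Complex.mul_conj, Complex.normSq_ofReal, hhalf] at hoff
    norm_num at hoff
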